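/- Let K = HahnSeries ℝ ℂ be the field of generalized Laurent series with complex coefficients and real exponents, and for λ ∈ ℝ write s^λ ∈ K for the monomial HahnSeries.single λ 1 (so s = s¹). Let n and k be integers with 0 ≤ k and k+2 ≤ n, and let λ be a real number with 0 < λ < (n−k−1)/(n+1). Then every nonzero z ∈ K satisfying z^{n−k}·(z + s^{−λ}·z^{n−k})^{k+1} = s has either ord(z) = 1/(n+1) or ord(z) = λ/(n−k−1), where ord(z) denotes the smallest exponent in the support of z. -/

import Mathlib

/-!
Write `a = ord z` and `y = s^{-λ} z^{n-k}`, so `ord y = (n-k)a - λ`. If `ord y = a` we are on the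
slope `a = λ/(n-k-1)`. Otherwise `ord (z + y) = min (a, ord y)` and taking orders in the equation
gives `(n-k)a + (k+1) min (a, (n-k)a - λ) = 1`. When the minimum is `a` this says `a = 1/(n+1)`;
when it is `(n-k)a - λ < a`, eliminating `a` forces `λ > (n-k-1)/(n+1)`, which the hypothesis
excludes.
-/

open HahnSeries

/-- The field of generalized Laurent series with complex coefficients and real exponents. -/
abbrev GenLaurent : Type := HahnSeries ℝ ℂ

/-- The monomial `s^λ`. -/
noncomputable def sPow (l : ℝ) : GenLaurent := HahnSeries.single l (1 : ℂ)

namespace HahnSeries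

variable {Γ R : Type*} [LinearOrder Γ] [AddMonoid R]

theorem orderTop_add_of_orderTop_ne {x y : R⟦Γ⟧} (h : x.orderTop ≠ y.orderTop) :
    (x + y).orderTop = min x.orderTop y.orderTop := by
  rcases h.lt_or_gt with h | h
  · rw [orderTop_add_eq_left h, min_eq_left h.le]
  · rw [orderTop_add_eq_right h, min_eq_right h.le]

theorem add_ne_zero_and_order_add_of_order_ne [Zero Γ] {x y : R⟦Γ⟧} (hx : x ≠ 0) (hy : y ≠ 0)
    (h : x.order ≠ y.order) : x + y ≠ 0 ∧ (x + y).order = min x.order y.order := by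
  have hne : x.orderTop ≠ y.orderTop := by
    rwa [← order_eq_orderTop_of_ne_zero hx, ← order_eq_orderTop_of_ne_zero hy, ne_eq,
      WithTop.coe_inj]
  have htop : (x + y).orderTop = ↑(min x.order y.order) := by
    rw [orderTop_add_of_orderTop_ne hne, ← order_eq_orderTop_of_ne_zero hx,
      ← order_eq_orderTop_of_ne_zero hy, WithTop.coe_min]
  have hxy : x + y ≠ 0 := orderTop_ne_top.1 (htop ▸ WithTop.coe_ne_top)
  exact ⟨hxy, WithTop.coe_inj.1 ((order_eq_orderTop_of_ne_zero hxy).trans htop)⟩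

end HahnSeries

theorem sPow_ne_zero (l : ℝ) : sPow l ≠ 0 :=
  single_ne_zero one_ne_zero

theorem order_sPow (l : ℝ) : (sPow l).order = l :=
  order_single one_ne_zero

theorem eq_one_div_of_mul_add_mul_min_eq {m c a l : ℝ} (hm : 1 < m) (hc : 0 ≤ c)
    (hl : l < (m - 1) / (m + c)) (h : m * a + c * min a (m * a - l) = 1) :
    a = 1 / (m + c) := by
  rw [lt_div_iff₀ (by linarith)] at hl
  rcases le_total a (m * a - l) with hmin | hmin
  · rw [min_eq_left hmin] at h
    rw [eq_div_iff (by linarith)]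
    linarith
  · rw [min_eq_right hmin] at h
    have hpos : 0 < (1 + c) * m := by positivity
    nlinarith [mul_le_mul_of_nonneg_left hmin hpos.le]

theorem order_of_root_two_slopes_general (n k : ℕ) (hk : k + 2 ≤ n) (lam : ℝ)
    (hlam' : lam < ((n : ℝ) - k - 1) / ((n : ℝ) + 1)) :
    ∀ z : GenLaurent, z ≠ 0 →
      z ^ (n - k) * (z + sPow (-lam) * z ^ (n - k)) ^ (k + 1) = sPow 1 →
      z.order = 1 / ((n : ℝ) + 1) ∨ z.order = lam / ((n : ℝ) - k - 1) := by
  intro z hz heq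
  have hm : ((n - k : ℕ) : ℝ) = n - k := by rw [Nat.cast_sub (by omega)]
  have hk' : (k : ℝ) + 2 ≤ n := by exact_mod_cast hk
  have hy : sPow (-lam) * z ^ (n - k) ≠ 0 := mul_ne_zero (sPow_ne_zero _) (pow_ne_zero _ hz)
  have hord_y : (sPow (-lam) * z ^ (n - k)).order = (n - k) * z.order - lam := by
    rw [order_mul (sPow_ne_zero _) (pow_ne_zero _ hz), order_pow, order_sPow, nsmul_eq_mul, hm]
    ring
  by_cases hslope : z.order = (sPow (-lam) * z ^ (n - k)).order
  · right
    rw [eq_div_iff (by linarith)]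
    linarith
  obtain ⟨hsum, hord_sum⟩ := add_ne_zero_and_order_add_of_order_ne hz hy hslope
  have hord := congrArg HahnSeries.order heq
  rw [order_mul (pow_ne_zero _ hz) (pow_ne_zero _ hsum), order_pow, order_pow, hord_sum, hord_y,
    order_sPow, nsmul_eq_mul, nsmul_eq_mul, hm] at hord
  push_cast at hord
  left
  have := eq_one_div_of_mul_add_mul_min_eq (by linarith) (by positivity)
    (by convert hlam' using 2; ring) hord
  rwa [show (n : ℝ) - k + (k + 1) = n + 1 by ring] at this

/-- In the small-blowup regime `0 < λ < (n−k−1)/(n+1)`, every root of the cleared critical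
point equation `z^{n−k}(z + s^{−λ} z^{n−k})^{k+1} = s` has order `1/(n+1)` or `λ/(n−k−1)`. -/
theorem order_of_root_two_slopes (n k : ℕ) (hk : k + 2 ≤ n) (lam : ℝ)
    (hlam : 0 < lam) (hlam' : lam < ((n : ℝ) - k - 1) / ((n : ℝ) + 1)) :
    ∀ z : GenLaurent, z ≠ 0 →
      z ^ (n - k) * (z + sPow (-lam) * z ^ (n - k)) ^ (k + 1) = sPow 1 →
      z.order = 1 / ((n : ℝ) + 1) ∨ z.order = lam / ((n : ℝ) - k - 1) :=
  order_of_root_two_slopes_general n k hk lam hlam'
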